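/- Let d be a real number with d > 1 and let a₁, a₂ ∈ ℝ satisfy a₁² + a₂² = 1. Define the fidelities of a 1 → 2 universal cloner in the irreducible representation α by F₁₂ = (1/d)·(aᵀ·A·a) and F₁₃ = (1/d)·(aᵀ·B·a), where a = (a₁, a₂). Then the point (F₁₂, F₁₃) lies on the ellipse d²·(F₁₂ + F₁₃ − 1)² + (d²/(d²−1))·(F₁₃ − F₁₂)² = 1; in particular, (d−1)/d ≤ F₁₂ + F₁₃ ≤ (d+1)/d, so as d → ∞ the ellipse is squeezed to the line F₁₃ = −F₁₂ + 1. -/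

import Mathlib

open Matrix

/-- The matrix `𝕍′_α(13)` of the irrep of the algebra of partially transposed permutation
operators for `n = 3`. -/
noncomputable def V13 (d : ℝ) : Matrix (Fin 2) (Fin 2) ℝ :=
  (1 / 2 : ℝ) • !![d + 1, -Real.sqrt (d ^ 2 - 1); -Real.sqrt (d ^ 2 - 1), d - 1]

/-- The matrix `𝕍′_α(23)` of the irrep of the algebra of partially transposed permutation
operators for `n = 3`. -/
noncomputable def V23 (d : ℝ) : Matrix (Fin 2) (Fin 2) ℝ :=
  (1 / 2 : ℝ) • !![d + 1, Real.sqrt (d ^ 2 - 1); Real.sqrt (d ^ 2 - 1), d - 1]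

/-!
Both quadratic forms share the diagonal part `((d+1)a₁² + (d-1)a₂²)/2` and differ only in the
sign of the off-diagonal term `√(d²-1)·a₁a₂`. Hence on the unit circle
`d(F₁₂ + F₁₃ - 1) = a₁² - a₂²` and `d(F₁₃ - F₁₂) = √(d²-1)·2a₁a₂`, and the ellipse equation
becomes `(a₁² - a₂²)² + (2a₁a₂)² = (a₁² + a₂²)² = 1`, i.e. `cos² 2θ + sin² 2θ = 1`.
-/

lemma dotProduct_mulVec_symm_fin_two {R : Type*} [CommRing R] (p q r x y : R) :
    ![x, y] ⬝ᵥ (!![p, r; r, q] *ᵥ ![x, y]) = p * x ^ 2 + 2 * r * x * y + q * y ^ 2 := by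
  rw [vec2_dotProduct, mulVec_fin_two]
  simp only [Fin.isValue, of_apply, cons_val', cons_val_zero, cons_val_one, cons_val_fin_one]
  ring

lemma dotProduct_V13_mulVec (d a₁ a₂ : ℝ) :
    ![a₁, a₂] ⬝ᵥ (V13 d *ᵥ ![a₁, a₂]) =
      ((d + 1) * a₁ ^ 2 - 2 * √(d ^ 2 - 1) * a₁ * a₂ + (d - 1) * a₂ ^ 2) / 2 := by
  rw [V13, smul_mulVec, dotProduct_smul, dotProduct_mulVec_symm_fin_two, smul_eq_mul]
  ring

lemma dotProduct_V23_mulVec (d a₁ a₂ : ℝ) :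
    ![a₁, a₂] ⬝ᵥ (V23 d *ᵥ ![a₁, a₂]) =
      ((d + 1) * a₁ ^ 2 + 2 * √(d ^ 2 - 1) * a₁ * a₂ + (d - 1) * a₂ ^ 2) / 2 := by
  rw [V23, smul_mulVec, dotProduct_smul, dotProduct_mulVec_symm_fin_two, smul_eq_mul]
  ring

/-- The fidelities of a `1 → 2` universal cloner produced by a real pure state
`a = (a₁, a₂)` in the irrep `α` lie on the ellipse
`d²(F₁₂+F₁₃−1)² + (d²/(d²−1))(F₁₃−F₁₂)² = 1`; in particular
`(d−1)/d ≤ F₁₂+F₁₃ ≤ (d+1)/d`. -/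
theorem stmt11 (d : ℝ) (hd : 1 < d) (a₁ a₂ : ℝ) (ha : a₁ ^ 2 + a₂ ^ 2 = 1)
    (F₁₂ F₁₃ : ℝ)
    (hF₁₂ : F₁₂ = (1 / d) * (![a₁, a₂] ⬝ᵥ (V13 d *ᵥ ![a₁, a₂])))
    (hF₁₃ : F₁₃ = (1 / d) * (![a₁, a₂] ⬝ᵥ (V23 d *ᵥ ![a₁, a₂]))) :
    d ^ 2 * (F₁₂ + F₁₃ - 1) ^ 2 + (d ^ 2 / (d ^ 2 - 1)) * (F₁₃ - F₁₂) ^ 2 = 1 ∧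
      (d - 1) / d ≤ F₁₂ + F₁₃ ∧ F₁₂ + F₁₃ ≤ (d + 1) / d := by
  have hd₀ : 0 < d := by linarith
  have hsqrt : √(d ^ 2 - 1) ^ 2 = d ^ 2 - 1 := Real.sq_sqrt (by nlinarith)
  have hsum : F₁₂ + F₁₃ = 1 + (a₁ ^ 2 - a₂ ^ 2) / d := by
    rw [hF₁₂, hF₁₃, dotProduct_V13_mulVec, dotProduct_V23_mulVec]
    field_simp
    linear_combination 2 * d * ha
  have hdiff : F₁₃ - F₁₂ = √(d ^ 2 - 1) * (2 * a₁ * a₂) / d := by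
    rw [hF₁₂, hF₁₃, dotProduct_V13_mulVec, dotProduct_V23_mulVec]
    field_simp
    ring
  have hpyth : (a₁ ^ 2 - a₂ ^ 2) ^ 2 + (2 * a₁ * a₂) ^ 2 = 1 := by
    linear_combination (a₁ ^ 2 + a₂ ^ 2 + 1) * ha
  refine ⟨?_, ?_, ?_⟩
  · have hd' : d ^ 2 - 1 ≠ 0 := by nlinarith
    rw [hsum, hdiff, add_sub_cancel_left, div_pow, div_pow, mul_pow, hsqrt]
    field_simp
    linear_combination hpyth
  · rw [hsum, div_le_iff₀ hd₀, add_mul, div_mul_cancel₀ _ hd₀.ne']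
    linarith [sq_nonneg a₁, sq_nonneg a₂]
  · rw [hsum, le_div_iff₀ hd₀, add_mul, div_mul_cancel₀ _ hd₀.ne']
    linarith [sq_nonneg a₁, sq_nonneg a₂]
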